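/- Let X be a Tychonoff space and μ : C*(X) → ℝ a functional. Then μ is normed, weakly additive, preserves max and weakly preserves min (i.e. μ ∈ R_max(X)) if and only if there exists a nonempty compact set F ⊆ βX such that F = S(μ) and μ(f) = sup{βf(x) : x ∈ F} for all f ∈ C*(X). Moreover, μ ∈ R_max(X)_c (i.e. additionally S(μ) ⊆ η(X)) if and only if such an F exists with F ⊆ η(X). -/

import Mathlib

open Set

/-- The Čech–Stone extension `βf : βX → ℝ` of a bounded continuous function `f : X → ℝ`
(obtained by extending `f`, viewed as a map into the compact interval `[-‖f‖, ‖f‖]`,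
over the Stone–Čech compactification). -/
noncomputable def betaExt {X : Type*} [TopologicalSpace X] (f : BoundedContinuousFunction X ℝ) :
    StoneCech X → ℝ :=
  Subtype.val ∘ stoneCechExtend
    (Continuous.subtype_mk f.continuous
      (fun x => Set.mem_Icc.mpr (abs_le.mp (Real.norm_eq_abs (f x) ▸ f.norm_coe_le_norm x)))
      : Continuous fun x => (⟨f x, _⟩ : Set.Icc (-‖f‖) ‖f‖))

variable {X : Type*} [TopologicalSpace X]

/-- `μ` is *normed*: `μ 1 = 1`. -/
def BNormed (μ : BoundedContinuousFunction X ℝ → ℝ) : Prop := μ 1 = 1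

/-- `μ` is *weakly additive*: `μ (f + c·1) = μ f + c`. -/
def BWeaklyAdditive (μ : BoundedContinuousFunction X ℝ → ℝ) : Prop :=
  ∀ (f : BoundedContinuousFunction X ℝ) (c : ℝ),
    μ (f + BoundedContinuousFunction.const X c) = μ f + c

/-- `μ` *preserves min*. -/
def BPreservesMin (μ : BoundedContinuousFunction X ℝ → ℝ) : Prop :=
  ∀ f g : BoundedContinuousFunction X ℝ, μ (f ⊓ g) = min (μ f) (μ g)

/-- `μ` *preserves max*. -/
def BPreservesMax (μ : BoundedContinuousFunction X ℝ → ℝ) : Prop :=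
  ∀ f g : BoundedContinuousFunction X ℝ, μ (f ⊔ g) = max (μ f) (μ g)

/-- `μ` *weakly preserves min*: `μ (min{f, c·1}) = min{μ f, c}`. -/
def BWeaklyPreservesMin (μ : BoundedContinuousFunction X ℝ → ℝ) : Prop :=
  ∀ (f : BoundedContinuousFunction X ℝ) (c : ℝ),
    μ (f ⊓ BoundedContinuousFunction.const X c) = min (μ f) c

/-- `μ` *weakly preserves max*: `μ (max{f, c·1}) = max{μ f, c}`. -/
def BWeaklyPreservesMax (μ : BoundedContinuousFunction X ℝ → ℝ) : Prop :=
  ∀ (f : BoundedContinuousFunction X ℝ) (c : ℝ),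
    μ (f ⊔ BoundedContinuousFunction.const X c) = max (μ f) c

/-- The support `S(μ) ⊆ βX` of a functional `μ` on `C*(X)`: points `p ∈ βX` such that every
open neighbourhood `O` of `p` admits `f, g ∈ C*(X)` with `βf = βg` off `O` and `μ f ≠ μ g`. -/
def betaSupport (μ : BoundedContinuousFunction X ℝ → ℝ) : Set (StoneCech X) :=
  {p | ∀ O : Set (StoneCech X), IsOpen O → p ∈ O →
    ∃ f g : BoundedContinuousFunction X ℝ,
      (∀ q ∉ O, betaExt f q = betaExt g q) ∧ μ f ≠ μ g}

/-- `R_min(X)`: normed, weakly additive functionals preserving min and weakly preserving max. -/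
def RMin (X : Type*) [TopologicalSpace X] : Set (BoundedContinuousFunction X ℝ → ℝ) :=
  {μ | BNormed μ ∧ BWeaklyAdditive μ ∧ BPreservesMin μ ∧ BWeaklyPreservesMax μ}

/-- `R_max(X)`: normed, weakly additive functionals preserving max and weakly preserving min. -/
def RMax (X : Type*) [TopologicalSpace X] : Set (BoundedContinuousFunction X ℝ → ℝ) :=
  {μ | BNormed μ ∧ BWeaklyAdditive μ ∧ BPreservesMax μ ∧ BWeaklyPreservesMin μ}

/-- `R_min(X)_c`: members of `R_min(X)` with compact support, i.e. `∅ ≠ S(μ) ⊆ η(X)`. -/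
def RMinC (X : Type*) [TopologicalSpace X] : Set (BoundedContinuousFunction X ℝ → ℝ) :=
  {μ | μ ∈ RMin X ∧ (betaSupport μ).Nonempty ∧
    betaSupport μ ⊆ Set.range (stoneCechUnit : X → StoneCech X)}

/-- `R_max(X)_c`: members of `R_max(X)` with compact support, i.e. `∅ ≠ S(μ) ⊆ η(X)`. -/
def RMaxC (X : Type*) [TopologicalSpace X] : Set (BoundedContinuousFunction X ℝ → ℝ) :=
  {μ | μ ∈ RMax X ∧ (betaSupport μ).Nonempty ∧
    betaSupport μ ⊆ Set.range (stoneCechUnit : X → StoneCech X)}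

/-!
For nonempty `F ⊆ βX` the functional `f ↦ sup βf(F)` clearly lies in `R_max(X)`, and if `F` is
closed its support is `F`: a Urysohn function on `βX` separates a point of `F` from the
complement of any of its neighbourhoods.

Conversely, let `μ ∈ R_max(X)` and `F = {p ∈ βX | βh(p) ≤ μ h for all h}`. Preservation of max
makes `μ` monotone, and comparing `min(f, μ f)` with `max(μ f - ε, min(g, ε) + μ f - ε)` shows
that whenever `μ g = 0` some point of `X` has `g ≤ ε` and `f ≥ μ f - ε`. These conditions are
directed in `(g, ε)`, so by compactness of `βX` they share a point `p`; it lies in `F` and has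
`βf(p) ≥ μ f`, whence `μ f = max βf(F)`.
-/

open BoundedContinuousFunction

lemma continuous_betaExt (f : X →ᵇ ℝ) : Continuous (betaExt f) :=
  continuous_subtype_val.comp (continuous_stoneCechExtend _)

@[simp]
lemma betaExt_stoneCechUnit (f : X →ᵇ ℝ) (x : X) : betaExt f (stoneCechUnit x) = f x :=
  congrArg Subtype.val (congrFun (stoneCechExtend_extends _) x)

lemma betaExt_eq {f : X →ᵇ ℝ} {φ : StoneCech X → ℝ} (hφ : Continuous φ)
    (h : ∀ x, φ (stoneCechUnit x) = f x) : betaExt f = φ :=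
  stoneCech_hom_ext (continuous_betaExt f) hφ (funext fun x => by simp [h])

lemma betaExt_zero : betaExt (0 : X →ᵇ ℝ) = fun _ => 0 :=
  betaExt_eq continuous_const fun _ => rfl

lemma betaExt_one : betaExt (1 : X →ᵇ ℝ) = fun _ => 1 :=
  betaExt_eq continuous_const fun _ => rfl

lemma betaExt_add_const (f : X →ᵇ ℝ) (c : ℝ) :
    betaExt (f + const X c) = (· + c) ∘ betaExt f :=
  betaExt_eq ((continuous_betaExt f).add continuous_const) fun x => by simp

lemma betaExt_inf_const (f : X →ᵇ ℝ) (c : ℝ) :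
    betaExt (f ⊓ const X c) = (min · c) ∘ betaExt f :=
  betaExt_eq ((continuous_betaExt f).min continuous_const) fun x => by simp

lemma betaExt_sup (f g : X →ᵇ ℝ) : betaExt (f ⊔ g) = betaExt f ⊔ betaExt g :=
  betaExt_eq ((continuous_betaExt f).max (continuous_betaExt g)) fun x => by simp

lemma betaExt_compContinuous_stoneCechUnit (Φ : C(StoneCech X, ℝ)) :
    betaExt ((mkOfCompact Φ).compContinuous ⟨stoneCechUnit, continuous_stoneCechUnit⟩) = Φ :=
  betaExt_eq Φ.continuous fun _ => rfl

lemma csSup_image_sup {α β : Type*} [ConditionallyCompleteLinearOrder β] {s : Set α}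
    (hs : s.Nonempty) {u v : α → β} (hu : BddAbove (u '' s)) (hv : BddAbove (v '' s)) :
    sSup ((u ⊔ v) '' s) = sSup (u '' s) ⊔ sSup (v '' s) := by
  have huv : BddAbove ((u ⊔ v) '' s) := by
    obtain ⟨a, ha⟩ := hu
    obtain ⟨b, hb⟩ := hv
    exact ⟨a ⊔ b, forall_mem_image.2 fun x hx =>
      sup_le_sup (ha (mem_image_of_mem u hx)) (hb (mem_image_of_mem v hx))⟩
  refine le_antisymm (csSup_le (hs.image _) (forall_mem_image.2 fun x hx => ?_)) (sup_le ?_ ?_)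
  · exact sup_le_sup (le_csSup hu (mem_image_of_mem u hx)) (le_csSup hv (mem_image_of_mem v hx))
  · exact csSup_le (hs.image u) (forall_mem_image.2 fun x hx =>
      le_sup_left.trans (le_csSup huv (mem_image_of_mem (u ⊔ v) hx)))
  · exact csSup_le (hs.image v) (forall_mem_image.2 fun x hx =>
      le_sup_right.trans (le_csSup huv (mem_image_of_mem (u ⊔ v) hx)))

section SupOver

variable {F : Set (StoneCech X)}

lemma bddAbove_image_betaExt (f : X →ᵇ ℝ) : BddAbove (betaExt f '' F) :=
  (isCompact_range (continuous_betaExt f)).bddAbove.mono (image_subset_range _ _)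

lemma sSup_image_betaExt_mem_RMax (hF : F.Nonempty) :
    (fun f => sSup (betaExt f '' F)) ∈ RMax X := by
  refine ⟨?_, fun f c => ?_, fun f g => ?_, fun f c => ?_⟩
  · simp only [BNormed, betaExt_one, hF.image_const, csSup_singleton]
  · simp only [betaExt_add_const, image_comp]
    exact ((monotone_id.add_const c).map_csSup_of_continuousAt
      (continuous_add_const c).continuousAt (hF.image _) (bddAbove_image_betaExt f)).symm
  · simp only [betaExt_sup]
    exact csSup_image_sup hF (bddAbove_image_betaExt f) (bddAbove_image_betaExt g)
  · simp only [betaExt_inf_const, image_comp]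
    exact ((monotone_id.min monotone_const).map_csSup_of_continuousAt
      (continuous_id.min continuous_const).continuousAt (hF.image _)
      (bddAbove_image_betaExt f)).symm

lemma betaSupport_sSup_image_betaExt (hF : IsClosed F) :
    betaSupport (fun f => sSup (betaExt f '' F)) = F := by
  refine Subset.antisymm (fun p hp => ?_) fun p hpF O hO hpO => ?_
  · by_contra hpF
    obtain ⟨f, g, hfg, hne⟩ := hp Fᶜ hF.isOpen_compl hpF
    exact hne (congrArg sSup (image_congr fun q hq => hfg q (not_not_intro hq)))
  obtain ⟨Φ, hΦO, hΦp, hΦ01⟩ := exists_continuous_zero_one_of_isClosed hO.isClosed_compl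
    isClosed_singleton (disjoint_singleton_right.2 (not_not_intro hpO))
  refine ⟨(mkOfCompact Φ).compContinuous ⟨stoneCechUnit, continuous_stoneCechUnit⟩, 0,
    fun q hq => ?_, ?_⟩
  · rw [betaExt_compContinuous_stoneCechUnit, betaExt_zero]
    exact hΦO hq
  · dsimp only
    rw [betaExt_compContinuous_stoneCechUnit, betaExt_zero, Set.Nonempty.image_const ⟨p, hpF⟩,
      csSup_singleton]
    exact (zero_lt_one.trans_le (le_csSup ⟨1, forall_mem_image.2 fun q _ => (hΦ01 q).2⟩
      ⟨p, hpF, hΦp rfl⟩)).ne'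

end SupOver

section RMax

variable {μ : (X →ᵇ ℝ) → ℝ}

lemma RMax.map_const (hμ : μ ∈ RMax X) (c : ℝ) : μ (const X c) = c := by
  obtain ⟨hnormed, hadd, -, -⟩ := hμ
  have h := hadd 1 (c - 1)
  rwa [hnormed, add_sub_cancel, show (1 : X →ᵇ ℝ) + const X (c - 1) = const X c by
    ext; simp] at h

lemma RMax.monotone (hμ : μ ∈ RMax X) : Monotone μ := fun f g hfg => by
  simpa [sup_eq_right.2 hfg] using hμ.2.2.1 f g

lemma RMax.exists_le_and_sub_le (hμ : μ ∈ RMax X) (f g : X →ᵇ ℝ) (hg : μ g = 0) {ε : ℝ}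
    (hε : 0 < ε) : ∃ x, g x ≤ ε ∧ μ f - ε ≤ f x := by
  have hmono := RMax.monotone hμ
  have hconst := RMax.map_const hμ
  obtain ⟨-, hadd, hmax, hmin⟩ := hμ
  by_contra! hfar
  have hle : f ⊓ const X (μ f) ≤ const X (μ f - ε) ⊔ (g ⊓ const X ε + const X (μ f - ε)) := by
    refine fun x => show min (f x) (μ f) ≤ max (μ f - ε) (min (g x) ε + (μ f - ε)) from ?_
    by_cases hx : g x ≤ ε
    · exact (min_le_left _ _).trans ((hfar x hx).le.trans (le_max_left _ _))
    · rw [min_eq_right (not_le.1 hx).le]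
      exact (min_le_right _ _).trans (le_of_eq_of_le (by ring) (le_max_right _ _))
  have := hmono hle
  rw [hmin, hmax, hadd, hmin, hg, hconst, min_self, min_eq_left hε.le, zero_add,
    max_self] at this
  linarith

lemma RMax.exists_forall_betaExt_le_and_le (hμ : μ ∈ RMax X) (f : X →ᵇ ℝ) :
    ∃ p, (∀ h, betaExt h p ≤ μ h) ∧ μ f ≤ betaExt f p := by
  have hadd : BWeaklyAdditive μ := hμ.2.1
  have hmax : BPreservesMax μ := hμ.2.2.1
  let ι := {gε : (X →ᵇ ℝ) × ℝ // μ gε.1 = 0 ∧ 0 < gε.2}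
  let S : ι → Set (StoneCech X) := fun i =>
    {p | betaExt i.1.1 p ≤ i.1.2 ∧ μ f - i.1.2 ≤ betaExt f p}
  have hS_closed (i : ι) : IsClosed (S i) :=
    (isClosed_le (continuous_betaExt _) continuous_const).inter
      (isClosed_le continuous_const (continuous_betaExt f))
  have hS_nonempty (i : ι) : (S i).Nonempty := by
    obtain ⟨x, hgx, hfx⟩ := RMax.exists_le_and_sub_le hμ f i.1.1 i.2.1 i.2.2
    exact ⟨stoneCechUnit x,
      by simpa only [S, mem_ofPred_eq, betaExt_stoneCechUnit] using ⟨hgx, hfx⟩⟩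
  have hS_anti (i j : ι) (hg : betaExt j.1.1 ≤ betaExt i.1.1) (hε : i.1.2 ≤ j.1.2) :
      S i ⊆ S j :=
    fun p ⟨hgp, hfp⟩ => ⟨(hg p).trans (hgp.trans hε), by linarith⟩
  have hS_directed : Directed (· ⊇ ·) S := fun i j => by
    let k : ι := ⟨(i.1.1 ⊔ j.1.1, min i.1.2 j.1.2),
      by rw [hmax, i.2.1, j.2.1, max_self], lt_min i.2.2 j.2.2⟩
    exact ⟨k, hS_anti k i (by rw [betaExt_sup]; exact le_sup_left) (min_le_left _ _),
      hS_anti k j (by rw [betaExt_sup]; exact le_sup_right) (min_le_right _ _)⟩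
  have : Nonempty ι := ⟨⟨(const X 0, 1), RMax.map_const hμ 0, one_pos⟩⟩
  obtain ⟨p, hp⟩ := IsCompact.nonempty_iInter_of_directed_nonempty_isCompact_isClosed S
    hS_directed hS_nonempty (fun i => (hS_closed i).isCompact) hS_closed
  refine ⟨p, fun h => le_of_forall_pos_le_add fun ε hε => ?_,
    le_of_forall_pos_le_add fun ε hε => ?_⟩
  · have hh : μ (h + const X (-μ h)) = 0 := by rw [hadd]; ring
    have := (mem_iInter.1 hp ⟨(h + const X (-μ h), ε), hh, hε⟩).1
    simp only [betaExt_add_const, Function.comp_apply] at this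
    linarith
  · have := (mem_iInter.1 hp ⟨(const X 0, ε), RMax.map_const hμ 0, hε⟩).2
    linarith

lemma RMax.exists_isClosed_eq_sSup (hμ : μ ∈ RMax X) :
    ∃ F : Set (StoneCech X), F.Nonempty ∧ IsClosed F ∧ ∀ f, μ f = sSup (betaExt f '' F) := by
  refine ⟨{p | ∀ h, betaExt h p ≤ μ h}, ?_, ?_, fun f => ?_⟩
  · obtain ⟨p, hp, -⟩ := RMax.exists_forall_betaExt_le_and_le hμ 0
    exact ⟨p, hp⟩
  · rw [ofPred_forall]
    exact isClosed_iInter fun h => isClosed_le (continuous_betaExt h) continuous_const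
  · obtain ⟨p, hp, hfp⟩ := RMax.exists_forall_betaExt_le_and_le hμ f
    refine (IsGreatest.csSup_eq ?_).symm
    exact ⟨⟨p, hp, le_antisymm (hp f) hfp⟩, forall_mem_image.2 fun q hq => hq f⟩

end RMax

theorem statement8_general {X : Type*} [TopologicalSpace X]
    (μ : BoundedContinuousFunction X ℝ → ℝ) :
    (μ ∈ RMax X ↔
      ∃ F : Set (StoneCech X), F.Nonempty ∧ IsCompact F ∧ F = betaSupport μ ∧
        ∀ f : BoundedContinuousFunction X ℝ, μ f = sSup (betaExt f '' F)) ∧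
    (μ ∈ RMaxC X ↔
      ∃ F : Set (StoneCech X), F.Nonempty ∧ IsCompact F ∧
        F ⊆ Set.range (stoneCechUnit : X → StoneCech X) ∧ F = betaSupport μ ∧
        ∀ f : BoundedContinuousFunction X ℝ, μ f = sSup (betaExt f '' F)) := by
  have hRMax : μ ∈ RMax X ↔
      ∃ F : Set (StoneCech X), F.Nonempty ∧ IsCompact F ∧ F = betaSupport μ ∧
        ∀ f : BoundedContinuousFunction X ℝ, μ f = sSup (betaExt f '' F) := by
    refine ⟨fun hμ => ?_, fun ⟨F, hne, _, _, hrep⟩ => ?_⟩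
    · obtain ⟨F, hne, hF, hrep⟩ := RMax.exists_isClosed_eq_sSup hμ
      refine ⟨F, hne, hF.isCompact, ?_, hrep⟩
      rw [funext hrep, betaSupport_sSup_image_betaExt hF]
    · rw [funext hrep]
      exact sSup_image_betaExt_mem_RMax hne
  refine ⟨hRMax, ⟨fun ⟨hμ, _, hsub⟩ => ?_, fun ⟨F, hne, hF, hsub, hsupp, hrep⟩ => ?_⟩⟩
  · obtain ⟨F, hne, hF, hsupp, hrep⟩ := hRMax.1 hμ
    exact ⟨F, hne, hF, hsupp ▸ hsub, hsupp, hrep⟩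
  · exact ⟨hRMax.2 ⟨F, hne, hF, hsupp, hrep⟩, hsupp ▸ hne, hsupp ▸ hsub⟩

/-- `μ ∈ R_max(X)` iff there is a nonempty compact `F ⊆ βX` with `F = S(μ)` and
`μ f = sup {βf p : p ∈ F}` for all `f ∈ C*(X)`; moreover `μ ∈ R_max(X)_c` iff such an `F`
exists contained in `η(X)`. -/
theorem statement8 {X : Type*} [TopologicalSpace X] [T35Space X]
    (μ : BoundedContinuousFunction X ℝ → ℝ) :
    (μ ∈ RMax X ↔
      ∃ F : Set (StoneCech X), F.Nonempty ∧ IsCompact F ∧ F = betaSupport μ ∧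
        ∀ f : BoundedContinuousFunction X ℝ, μ f = sSup (betaExt f '' F)) ∧
    (μ ∈ RMaxC X ↔
      ∃ F : Set (StoneCech X), F.Nonempty ∧ IsCompact F ∧
        F ⊆ Set.range (stoneCechUnit : X → StoneCech X) ∧ F = betaSupport μ ∧
        ∀ f : BoundedContinuousFunction X ℝ, μ f = sSup (betaExt f '' F)) :=
  statement8_general μ
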